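/- arXiv:1909.11231 — 4 statements merged into one kernel-verified Lean document; each statement's English description precedes it below -/
import Mathlib

section
/- Let $R$ be a commutative Noetherian ring, $M$ an $R$-module, and $x_1, \ldots, x_d$ a sequence of elements with $(x_1, \ldots, x_{d-i})M = 0$. Then for all $j, k \geq 1$ and all $\ell \geq i+1$, the natural map of Koszul cohomologies $\alpha^\ell : H^\ell(x_1^j, \ldots, x_d^j; M) \to H^\ell(x_1^{j+k}, \ldots, x_d^{j+k}; M)$ (induced by multiplication by $(x_1 \cdots x_d)^k$ on the degree-$d$ cokernel) is the zero map. -/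
/-!
In degree `ℓ` the comparison map multiplies the component indexed by an `ℓ`-subset `S` of
`{1, …, d}` by `∏_{t ∈ S} x_t^k`. When `ℓ > i`, such an `S` cannot fit inside the last `i`
indices, so it contains some `t ≤ d - i`, and `x_t` annihilates `M`. Hence the comparison map
is already zero on cochains in degrees `≥ i + 1`, and every cocycle is sent to the coboundary
of `0`.
-/

open Finset

/-- Degree-`i` component of the Koszul cochain complex on `d` elements with
coefficients in `M`: functions from `i`-element subsets of `Fin d` to `M`. -/
def KoszulFun (M : Type*) (d i : ℕ) : Type _ :=
  {S : Finset (Fin d) // S.card = i} → M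

instance (M : Type*) [AddCommGroup M] (d i : ℕ) : AddCommGroup (KoszulFun M d i) :=
  Pi.addCommGroup

instance (R M : Type*) [CommRing R] [AddCommGroup M] [Module R M] (d i : ℕ) :
    Module R (KoszulFun M d i) :=
  Pi.module _ _ _

/-- The Koszul differential `K^i(x; M) → K^{i+1}(x; M)`. -/
def koszulD (R : Type*) [CommRing R] (M : Type*) [AddCommGroup M] [Module R M]
    {d : ℕ} (x : Fin d → R) (i : ℕ) :
    KoszulFun M d i →ₗ[R] KoszulFun M d (i + 1) where
  toFun f S := ∑ j ∈ S.1.attach,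
    ((-1 : ℤ) ^ (S.1.filter (fun t => t < j.1)).card) • x j.1 •
      f ⟨S.1.erase j.1, by simp [Finset.card_erase_of_mem j.2, S.2]⟩
  map_add' f g := by
    funext S
    show (∑ _ ∈ _, _ : M) = (∑ _ ∈ _, _ : M) + (∑ _ ∈ _, _ : M)
    rw [← Finset.sum_add_distrib]
    refine Finset.sum_congr rfl fun j _ => ?_
    show _ • (x j.1 • (f _ + g _)) = _
    rw [smul_add, smul_add]
  map_smul' r f := by
    funext S
    show (∑ _ ∈ _, _ : M) = r • (∑ _ ∈ _, _ : M)
    rw [Finset.smul_sum]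
    refine Finset.sum_congr rfl fun j _ => ?_
    show _ • (x j.1 • (r • f _)) = r • _
    rw [smul_comm (x j.1) r, smul_comm _ r]

/-- The Koszul differential mapping into degree `i` (the zero map when `i = 0`). -/
def koszulDFrom (R : Type*) [CommRing R] (M : Type*) [AddCommGroup M] [Module R M]
    {d : ℕ} (x : Fin d → R) :
    (i : ℕ) → (KoszulFun M d (i - 1) →ₗ[R] KoszulFun M d i)
  | 0 => 0
  | (i + 1) => koszulD R M x i

/-- The comparison chain map `K^•(x^j; M) → K^•(x^{j+k}; M)` (the tensor product of the
one-element comparison maps); on the component indexed by a subset `S` it is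
multiplication by `∏_{t ∈ S} x_t^k`.  It lifts multiplication by `(x₁ ⋯ x_d)^k` on the
degree-`d` cokernel. -/
def koszulComp (R : Type*) [CommRing R] (M : Type*) [AddCommGroup M] [Module R M]
    {d : ℕ} (x : Fin d → R) (k i : ℕ) :
    KoszulFun M d i →ₗ[R] KoszulFun M d i where
  toFun f S := (∏ t ∈ S.1, x t ^ k) • f S
  map_add' f g := by
    funext S
    show (_ : R) • (f S + g S) = (_ : R) • f S + (_ : R) • g S
    rw [smul_add]
  map_smul' r f := by
    funext S
    show (_ : R) • (r • f S) = r • ((_ : R) • f S)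
    rw [smul_comm]

/-- A Koszul `i`-cocycle `f` for the sequence `x^j` is *killed at stage `k`* if its image
under the comparison map `K^i(x^j; M) → K^i(x^{j+k}; M)` is a coboundary, i.e. the class
`α^i_{M;x;j;j+k}(f)` is zero in `H^i(x^{j+k}; M)`. -/
def KoszulKilled (R : Type*) [CommRing R] (M : Type*) [AddCommGroup M] [Module R M]
    {d : ℕ} (x : Fin d → R) (i j k : ℕ) (f : KoszulFun M d i) : Prop :=
  ∃ g : KoszulFun M d (i - 1),
    koszulDFrom R M (fun t => x t ^ (j + k)) i g = koszulComp R M x k i f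

/-- The `i`-th local cohomology bound of `M` with respect to the sequence `x`:
the supremum, over all `j` and all `i`-cocycles `f` of `K^•(x^j; M)` which die in the
direct limit `H^i_{(x)}(M) = colim H^i(x^j; M)`, of the least `k` such that
`α^i_{M;x;j;j+k}(f) = 0`. -/
noncomputable def lcb (R : Type*) [CommRing R] (M : Type*) [AddCommGroup M] [Module R M]
    {d : ℕ} (x : Fin d → R) (i : ℕ) : ℕ∞ :=
  ⨆ (j : ℕ) (f : {f : KoszulFun M d i //
      koszulD R M (fun t => x t ^ j) i f = 0 ∧ ∃ k, KoszulKilled R M x i j k f}),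
    ((sInf {k : ℕ | KoszulKilled R M x i j k f.1} : ℕ) : ℕ∞)

/-- The `i`-th Koszul cohomology `H^i(x; M)` of `M` with respect to the sequence `x`. -/
abbrev koszulH (R : Type*) [CommRing R] (M : Type*) [AddCommGroup M] [Module R M]
    {d : ℕ} (x : Fin d → R) (i : ℕ) : Type _ :=
  ↥(LinearMap.ker (koszulD R M x i)) ⧸
    (LinearMap.range (koszulDFrom R M x i)).comap (LinearMap.ker (koszulD R M x i)).subtype

theorem Fin.exists_mem_lt_sub_of_lt_card {d i : ℕ} {S : Finset (Fin d)} (hS : i < S.card) :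
    ∃ t ∈ S, (t : ℕ) < d - i := by
  by_contra! h
  have hsub : S.map Fin.valEmbedding ⊆ Ico (d - i) d := fun n hn => by
    obtain ⟨t, ht, rfl⟩ := mem_map.1 hn
    exact mem_Ico.2 ⟨h t ht, t.2⟩
  have := card_le_card hsub
  rw [card_map, Nat.card_Ico] at this
  omega

section Comparison

variable {R : Type*} [CommRing R] {M : Type*} [AddCommGroup M] [Module R M] {d : ℕ}

theorem koszulComp_apply (x : Fin d → R) (k i : ℕ) (f : KoszulFun M d i)
    (S : {S : Finset (Fin d) // S.card = i}) :
    koszulComp R M x k i f S = (∏ t ∈ S.1, x t ^ k) • f S :=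
  rfl

theorem koszulComp_eq_zero_of_forall_exists_smul_eq_zero (x : Fin d → R) {k : ℕ} (hk : k ≠ 0)
    (i : ℕ) (h : ∀ S : Finset (Fin d), S.card = i → ∃ t ∈ S, ∀ m : M, x t • m = 0) :
    koszulComp R M x k i = 0 := by
  refine LinearMap.ext fun f => funext fun S => ?_
  obtain ⟨t, ht, hxt⟩ := h S.1 S.2
  obtain ⟨k', rfl⟩ := Nat.exists_eq_succ_of_ne_zero hk
  rw [koszulComp_apply, ← prod_erase_mul _ _ ht, pow_succ, mul_smul, mul_smul, hxt,
    smul_zero, smul_zero]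
  rfl

end Comparison

theorem statement1_general {R : Type*} [CommRing R]
    (M : Type*) [AddCommGroup M] [Module R M] {d : ℕ} (x : Fin d → R) (i : ℕ)
    (hx : ∀ t : Fin d, (t : ℕ) < d - i → ∀ m : M, x t • m = 0)
    (j k ℓ : ℕ) (hk : 1 ≤ k) (hℓ : i + 1 ≤ ℓ)
    (f : KoszulFun M d ℓ) :
    ∃ g : KoszulFun M d (ℓ - 1),
      koszulDFrom R M (fun t => x t ^ (j + k)) ℓ g = koszulComp R M x k ℓ f := by
  have hcomp : koszulComp R M x k ℓ = 0 :=
    koszulComp_eq_zero_of_forall_exists_smul_eq_zero x (by omega) ℓ fun S hS => by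
      obtain ⟨t, ht, hlt⟩ := Fin.exists_mem_lt_sub_of_lt_card (by omega : i < S.card)
      exact ⟨t, ht, hx t hlt⟩
  exact ⟨0, by rw [map_zero, hcomp, LinearMap.zero_apply]⟩

/-- Let `R` be a commutative Noetherian ring, `M` an `R`-module and
`x₁, …, x_d` a sequence of elements with `(x₁, …, x_{d-i}) M = 0`.  Then for all
`j, k ≥ 1` and all `ℓ ≥ i + 1`, the natural map of Koszul cohomologies
`α^ℓ : H^ℓ(x₁^j, …, x_d^j; M) → H^ℓ(x₁^{j+k}, …, x_d^{j+k}; M)` (induced by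
multiplication by `(x₁ ⋯ x_d)^k` on the degree-`d` cokernel) is the zero map; i.e.
every `ℓ`-cocycle of `K^•(x^j; M)` is sent by the comparison chain map to a coboundary
of `K^•(x^{j+k}; M)`. -/
theorem statement1 {R : Type*} [CommRing R] [IsNoetherianRing R]
    (M : Type*) [AddCommGroup M] [Module R M] {d : ℕ} (x : Fin d → R) (i : ℕ)
    (hx : ∀ t : Fin d, (t : ℕ) < d - i → ∀ m : M, x t • m = 0)
    (j k ℓ : ℕ) (hj : 1 ≤ j) (hk : 1 ≤ k) (hℓ : i + 1 ≤ ℓ)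
    (f : KoszulFun M d ℓ) (hf : koszulD R M (fun t => x t ^ j) ℓ f = 0) :
    ∃ g : KoszulFun M d (ℓ - 1),
      koszulDFrom R M (fun t => x t ^ (j + k)) ℓ g = koszulComp R M x k ℓ f :=
  statement1_general M x i hx j k ℓ hk hℓ f
end

section
/- Let $R$ be a Noetherian normal domain, $K \subseteq R$ an ideal of pure height 1, and $a, c \in K$ nonzero elements such that: the principal ideal $(a)$ has primary decomposition $(a) = K \cap K'$ where $K'$ is pure height 1 with components disjoint from those of $K$, and $c$ avoids all minimal primes of $K'$. Then for every integer $i \geq 1$, $a(a,c)^{i-1}K \cap c^i K = (a c^i)$. -/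
/-!
If `x = a y = cⁱ k` with `k ∈ K`, then `cⁱ k ∈ (a) ⊆ K'`. Since `K'` has no embedded primes and
`c` avoids its minimal primes, `c` is a nonzerodivisor on `R ⧸ K'`, so `k ∈ K ∩ K' = (a)` and
`x ∈ (a cⁱ)`.
-/

open IsLocalRing

/-- The height of an ideal: the infimum of the heights (in the prime spectrum) of the
primes containing it. -/
noncomputable def idealHeight {R : Type*} [CommRing R] (I : Ideal R) : ℕ∞ :=
  ⨅ (P : PrimeSpectrum R) (_ : I ≤ P.asIdeal), Order.height P

/-- The depth of a module `N` over a local ring `A`: the supremum of the lengths of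
weakly regular sequences on `N` consisting of elements of the maximal ideal. -/
noncomputable def moduleDepth (A : Type*) [CommRing A] [IsLocalRing A]
    (N : Type*) [AddCommGroup N] [Module A N] : ℕ∞ :=
  ⨆ (rs : {rs : List A // (∀ r ∈ rs, r ∈ maximalIdeal A) ∧
      RingTheory.Sequence.IsWeaklyRegular N rs}), ((rs.1.length : ℕ) : ℕ∞)

/-- A Noetherian local ring is *Cohen–Macaulay* if its depth equals its Krull
dimension. -/
def IsCohenMacaulayLocalRing (A : Type*) [CommRing A] [IsLocalRing A] : Prop :=
  (moduleDepth A A : WithBot ℕ∞) = ringKrullDim A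

/-- The multiplicative set of elements avoiding every minimal prime of `I`. -/
def avoidMinPrimes {R : Type*} [CommRing R] (I : Ideal R) : Submonoid R where
  carrier := {w | ∀ P ∈ I.minimalPrimes, w ∉ P}
  one_mem' := fun P hP => by
    have : P.IsPrime := hP.1.1
    exact (Ideal.ne_top_iff_one P).mp this.ne_top
  mul_mem' := fun {a b} ha hb P hP hab => by
    have hprime : P.IsPrime := hP.1.1
    rcases hprime.mem_or_mem hab with h | h
    · exact ha P hP h
    · exact hb P hP h

/-- The `n`-th symbolic power `I^{(n)} = Iⁿ R_W ∩ R`, where `W` is the complement of the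
union of the minimal primes of `I`. -/
noncomputable def symbolicPower {R : Type*} [CommRing R] (I : Ideal R) (n : ℕ) : Ideal R :=
  ((I ^ n).map (algebraMap R (Localization (avoidMinPrimes I)))).comap
    (algebraMap R (Localization (avoidMinPrimes I)))

theorem isSMulRegular_quotient_of_forall_notMem_minimalPrimes {R : Type*} [CommRing R]
    [IsNoetherianRing R] {I : Ideal R} {c : R}
    (hpure : associatedPrimes R (R ⧸ I) = I.minimalPrimes) (hc : ∀ P ∈ I.minimalPrimes, c ∉ P) :
    IsSMulRegular (R ⧸ I) c := by
  by_contra hreg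
  have hmem : c ∈ ⋃ P ∈ associatedPrimes R (R ⧸ I), (P : Set R) := by
    rw [biUnion_associatedPrimes_eq_compl_regular R (R ⧸ I)]
    exact hreg
  obtain ⟨P, hP, hcP⟩ := Set.mem_iUnion₂.mp hmem
  exact hc P (hpure ▸ hP) hcP

theorem Ideal.mem_of_mul_mem_of_isSMulRegular_quotient {R : Type*} [CommRing R] {I : Ideal R}
    {b k : R} (hb : IsSMulRegular (R ⧸ I) b) (hbk : b * k ∈ I) : k ∈ I := by
  rw [← Ideal.Quotient.eq_zero_iff_mem]
  refine hb (?_ : b • Ideal.Quotient.mk I k = b • 0)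
  rw [smul_zero]
  exact Ideal.Quotient.eq_zero_iff_mem.mpr hbk

theorem Ideal.span_singleton_inf_span_singleton_mul_le {R : Type*} [CommRing R]
    {K K' : Ideal R} {a b : R} (hdecomp : Ideal.span {a} = K ⊓ K')
    (hb : IsSMulRegular (R ⧸ K') b) :
    Ideal.span {a} ⊓ Ideal.span {b} * K ≤ Ideal.span {a * b} := by
  rintro x ⟨hxa, hxbK⟩
  obtain ⟨k, hkK, rfl⟩ := Ideal.mem_span_singleton_mul.mp hxbK
  have hkK' : k ∈ K' :=
    Ideal.mem_of_mul_mem_of_isSMulRegular_quotient hb (hdecomp ▸ hxa : b * k ∈ K ⊓ K').2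
  obtain ⟨t, rfl⟩ := Ideal.mem_span_singleton'.mp (hdecomp ▸ ⟨hkK, hkK'⟩ : k ∈ Ideal.span {a})
  exact Ideal.mem_span_singleton.mpr ⟨t, by ring⟩

theorem statement10_general
    (R : Type) [CommRing R] [IsNoetherianRing R]
    (K K' : Ideal R) (a c : R) (ha : a ∈ K) (hc : c ∈ K)
    -- `K` and `K'` are pure height one
    (hK'pure : associatedPrimes R (R ⧸ K') = K'.minimalPrimes)
    -- `(a) = K ∩ K'`, with the components of `K'` disjoint from those of `K`
    (hdecomp : Ideal.span {a} = K ⊓ K')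
    -- `c` avoids every component of `K'`
    (hcK' : ∀ P ∈ K'.minimalPrimes, c ∉ P) :
    ∀ i, 1 ≤ i →
      (Ideal.span {a} * ((Ideal.span {a} ⊔ Ideal.span {c}) ^ (i - 1) * K)) ⊓
          (Ideal.span {c ^ i} * K) =
        Ideal.span {a * c ^ i} := by
  intro i hi
  have hreg : IsSMulRegular (R ⧸ K') (c ^ i) :=
    (isSMulRegular_quotient_of_forall_notMem_minimalPrimes hK'pure hcK').pow i
  refine le_antisymm ((inf_le_inf_right _ Ideal.mul_le_left).trans
    (Ideal.span_singleton_inf_span_singleton_mul_le hdecomp hreg)) ?_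
  have hci : c ^ i = c ^ (i - 1) * c := by rw [← pow_succ, Nat.sub_add_cancel hi]
  have hcpow : c ^ (i - 1) ∈ (Ideal.span {a} ⊔ Ideal.span {c}) ^ (i - 1) :=
    Ideal.pow_mem_pow (Ideal.mem_sup_right (Ideal.mem_span_singleton_self c)) _
  rw [Ideal.span_singleton_le_iff_mem]
  exact ⟨Ideal.mem_span_singleton_mul.mpr ⟨c ^ i, hci ▸ Ideal.mul_mem_mul hcpow hc, rfl⟩,
    Ideal.mem_span_singleton_mul.mpr ⟨a, ha, mul_comm _ _⟩⟩

/-- Let `R` be a Noetherian normal domain, `K ⊆ R` an ideal of pure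
height 1, and `a, c ∈ K` nonzero elements such that the principal ideal `(a)` has the
decomposition `(a) = K ∩ K'` where `K'` is pure height 1 with components disjoint from
those of `K`, and `c` avoids all minimal primes of `K'`.  Then for every `i ≥ 1`,
`a(a,c)^{i-1}K ∩ cⁱK = (a cⁱ)`. -/
theorem statement10
    (R : Type) [CommRing R] [IsNoetherianRing R] [IsDomain R] [IsIntegrallyClosed R]
    (K K' : Ideal R) (a c : R) (ha : a ∈ K) (hc : c ∈ K) (ha0 : a ≠ 0) (hc0 : c ≠ 0)
    -- `K` and `K'` are pure height one
    (hKpure : associatedPrimes R (R ⧸ K) = K.minimalPrimes)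
    (hKht : ∀ P ∈ K.minimalPrimes, idealHeight P = 1)
    (hK'pure : associatedPrimes R (R ⧸ K') = K'.minimalPrimes)
    (hK'ht : ∀ P ∈ K'.minimalPrimes, idealHeight P = 1)
    -- `(a) = K ∩ K'`, with the components of `K'` disjoint from those of `K`
    (hdecomp : Ideal.span {a} = K ⊓ K')
    (hdisj : K.minimalPrimes ∩ K'.minimalPrimes = ∅)
    -- `c` avoids every component of `K'`
    (hcK' : ∀ P ∈ K'.minimalPrimes, c ∉ P) :
    ∀ i, 1 ≤ i →
      (Ideal.span {a} * ((Ideal.span {a} ⊔ Ideal.span {c}) ^ (i - 1) * K)) ⊓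
          (Ideal.span {c ^ i} * K) =
        Ideal.span {a * c ^ i} :=
  statement10_general R K K' a c ha hc hK'pure hdecomp hcK'
end

section
/- Let $(R, \mathfrak{m}, k)$ be a local F-finite domain of prime characteristic $p > 0$ and for each $e$ let $I_e = \{r \in R : \varphi(F^e_* r) \in \mathfrak{m} \text{ for all } \varphi \in \operatorname{Hom}_R(F^e_* R, R)\}$ be the Frobenius degeneracy ideals. Suppose $I \subseteq R$ is an $\mathfrak{m}$-primary ideal, $u \in R$, and $x \in R^\circ$ is an element such that $I_e \subseteq ((I^{[p^e]} : u^{p^e}) : x)$ and $(I^{[p^e]} : u^{p^e}) \subseteq I_e$ for all $e$. If moreover $I^{[p^e]}$ is tightly closed for all $e$, then $I_e = (I^{[p^e]} : u^{p^e})$ for all $e \in \mathbb{N}$. -/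
/-!
If `r ∈ Iₑ` then `r^{p^{e₀}} ∈ I_{e+e₀} ⊆ ((I^{[p^{e+e₀}]} : u^{p^{e+e₀}}) : x)`, so
`x (u^{pᵉ} r)^{p^{e₀}} ∈ (I^{[pᵉ]})^{[p^{e₀}]}` for every `e₀`. Hence `u^{pᵉ} r` lies in the tight
closure of `I^{[pᵉ]}`, which is `I^{[pᵉ]}` itself.
-/

/-- The Frobenius power `I^{[q]}` of an ideal: the ideal generated by the `q`-th powers
of the elements of `I`. -/
def frobPow {R : Type*} [CommRing R] (I : Ideal R) (q : ℕ) : Ideal R :=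
  Ideal.span ((· ^ q) '' (I : Set R))

/-- `R°`: the set of elements avoiding every minimal prime of `R`. -/
def offMin (R : Type*) [CommRing R] : Set R :=
  {c | ∀ P ∈ minimalPrimes R, c ∉ P}

/-- The tight closure of an ideal `I` in a ring of characteristic `p`:
`z ∈ I*` iff there is `c ∈ R°` with `c z^{pᵉ} ∈ I^{[pᵉ]}` for all `e ≫ 0`. -/
def tightClosure (p : ℕ) {R : Type*} [CommRing R] (I : Ideal R) : Set R :=
  {z | ∃ c ∈ offMin R, ∃ E : ℕ, ∀ e ≥ E, c * z ^ p ^ e ∈ frobPow I (p ^ e)}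

/-- The `e`-th Frobenius degeneracy set
`Iₑ = {r ∈ R ∣ φ(F^e_* r) ∈ 𝔪 for all φ ∈ Hom_R(F^e_* R, R)}`; here an `R`-linear map
`F^e_* R → R` is an additive map `φ : R → R` with `φ(a^{pᵉ} s) = a φ(s)`. -/
def frobDegenSet (p : ℕ) (R : Type*) [CommRing R] [IsLocalRing R] (e : ℕ) : Set R :=
  {r | ∀ φ : R →+ R, (∀ a s : R, φ (a ^ p ^ e * s) = a * φ s) →
    φ r ∈ IsLocalRing.maximalIdeal R}

section FrobeniusPowers

variable {R : Type*} [CommRing R]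

lemma pow_mem_frobPow {I : Ideal R} {a : R} (ha : a ∈ I) (q : ℕ) : a ^ q ∈ frobPow I q :=
  Ideal.subset_span ⟨a, ha, rfl⟩

lemma frobPow_mul_le (I : Ideal R) (q q₀ : ℕ) :
    frobPow I (q * q₀) ≤ frobPow (frobPow I q) q₀ := by
  rw [frobPow, Ideal.span_le]
  rintro _ ⟨a, ha, rfl⟩
  simpa only [pow_mul, SetLike.mem_coe] using pow_mem_frobPow (pow_mem_frobPow ha q) q₀

lemma mem_tightClosure_of_forall_mul_pow_mem (p : ℕ) {I : Ideal R} {c z : R}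
    (hc : c ∈ offMin R) (h : ∀ e : ℕ, c * z ^ p ^ e ∈ frobPow I (p ^ e)) :
    z ∈ tightClosure p I :=
  ⟨c, hc, 0, fun e _ => h e⟩

end FrobeniusPowers

/-- Precomposing a map `F^{e+e₀}_* R → R` with `F^{e₀}` gives a map `F^e_* R → R`. -/
lemma pow_mem_frobDegenSet (p : ℕ) {R : Type*} [CommRing R] [IsLocalRing R] [ExpChar R p]
    {e : ℕ} {r : R} (hr : r ∈ frobDegenSet p R e) (e₀ : ℕ) :
    r ^ p ^ e₀ ∈ frobDegenSet p R (e + e₀) := by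
  intro φ hφ
  have hlin : ∀ a s : R, φ (iterateFrobenius R p e₀ (a ^ p ^ e * s)) =
      a * φ (iterateFrobenius R p e₀ s) := by
    intro a s
    rw [iterateFrobenius_def, iterateFrobenius_def, mul_pow, ← pow_mul, ← pow_add]
    exact hφ a _
  simpa only [AddMonoidHom.coe_comp, Function.comp_apply, RingHom.toAddMonoidHom_eq_coe,
    AddMonoidHom.coe_coe, iterateFrobenius_def] using
    hr (φ.comp (iterateFrobenius R p e₀).toAddMonoidHom) hlin

lemma mul_mem_tightClosure_frobPow_of_mem_frobDegenSet (p : ℕ) {R : Type*} [CommRing R]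
    [IsLocalRing R] [ExpChar R p] {I : Ideal R} {u x : R} (hx : x ∈ offMin R)
    (h₁ : ∀ e : ℕ, frobDegenSet p R e ⊆
      ↑((Submodule.colon ((frobPow I (p ^ e)).colon (Ideal.span {u ^ p ^ e}) :
          Submodule R R) (Ideal.span {x}) : Ideal R)))
    {e : ℕ} {r : R} (hr : r ∈ frobDegenSet p R e) :
    u ^ p ^ e * r ∈ tightClosure p (frobPow I (p ^ e)) := by
  refine mem_tightClosure_of_forall_mul_pow_mem p hx fun e₀ => ?_
  have hcolon := h₁ (e + e₀) (pow_mem_frobDegenSet p hr e₀)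
  rw [SetLike.mem_coe, Ideal.mem_colon_span_singleton, Ideal.mem_colon_span_singleton]
    at hcolon
  have hrw : x * (u ^ p ^ e * r) ^ p ^ e₀ = r ^ p ^ e₀ * x * u ^ p ^ (e + e₀) := by
    rw [mul_pow, ← pow_mul, ← pow_add]
    ring
  rw [hrw]
  exact frobPow_mul_le I (p ^ e) (p ^ e₀) (by rwa [← pow_add])

theorem statement13_general (p : ℕ)
    (R : Type*) [CommRing R] [IsLocalRing R] [ExpChar R p]
    (I : Ideal R) (u : R) (x : R) (hx : x ∈ offMin R)
    (h₁ : ∀ e : ℕ, frobDegenSet p R e ⊆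
      ↑((Submodule.colon ((frobPow I (p ^ e)).colon (Ideal.span {u ^ p ^ e}) :
          Submodule R R) (Ideal.span {x}) : Ideal R)))
    (h₂ : ∀ e : ℕ, ↑((frobPow I (p ^ e)).colon (Ideal.span {u ^ p ^ e}) : Ideal R) ⊆
      frobDegenSet p R e)
    (htc : ∀ e : ℕ, tightClosure p (frobPow I (p ^ e)) = ↑(frobPow I (p ^ e))) :
    ∀ e : ℕ, frobDegenSet p R e =
      ↑((frobPow I (p ^ e)).colon (Ideal.span {u ^ p ^ e}) : Ideal R) := by
  intro e
  refine Set.Subset.antisymm (fun r hr => ?_) (h₂ e)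
  have hmem := mul_mem_tightClosure_frobPow_of_mem_frobDegenSet p hx h₁ hr
  rw [htc e, SetLike.mem_coe] at hmem
  rwa [SetLike.mem_coe, Ideal.mem_colon_span_singleton, mul_comm]

/-- Let `(R, 𝔪, k)` be a local F-finite domain of prime
characteristic `p > 0` with Frobenius degeneracy ideals `Iₑ`.  Suppose `I ⊆ R` is an
`𝔪`-primary ideal, `u ∈ R`, and `x ∈ R°` is such that `Iₑ ⊆ ((I^{[pᵉ]} : u^{pᵉ}) : x)`
and `(I^{[pᵉ]} : u^{pᵉ}) ⊆ Iₑ` for all `e`.  If moreover `I^{[pᵉ]}` is tightly closed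
for all `e`, then `Iₑ = (I^{[pᵉ]} : u^{pᵉ})` for all `e ∈ ℕ`. -/
theorem statement13 (p : ℕ) [Fact p.Prime]
    (R : Type*) [CommRing R] [IsNoetherianRing R] [IsLocalRing R] [IsDomain R]
    [CharP R p] [ExpChar R p] (hFfinite : (frobenius R p).Finite)
    (I : Ideal R) (hI : I.radical = IsLocalRing.maximalIdeal R)
    (u : R) (x : R) (hx : x ∈ offMin R)
    (h₁ : ∀ e : ℕ, frobDegenSet p R e ⊆
      ↑((Submodule.colon ((frobPow I (p ^ e)).colon (Ideal.span {u ^ p ^ e}) :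
          Submodule R R) (Ideal.span {x}) : Ideal R)))
    (h₂ : ∀ e : ℕ, ↑((frobPow I (p ^ e)).colon (Ideal.span {u ^ p ^ e}) : Ideal R) ⊆
      frobDegenSet p R e)
    (htc : ∀ e : ℕ, tightClosure p (frobPow I (p ^ e)) = ↑(frobPow I (p ^ e))) :
    ∀ e : ℕ, frobDegenSet p R e =
      ↑((frobPow I (p ^ e)).colon (Ideal.span {u ^ p ^ e}) : Ideal R) :=
  statement13_general p R I u x hx h₁ h₂ htc
end

section
/- Let $R$ be a Noetherian ring, $x_1, \ldots, x_d$ a regular sequence, $J \subseteq R$ an ideal with $x_1 \in J$, and $c, r \in R$ and $e, t \geq 1$ integers such that $c r^{p^e} (x_1 x_2 \cdots x_d)^{(t-1)p^e} \in (x_1^{t-1} J, x_2^t, \ldots, x_d^t)^{[p^e]}$. Then $c r^{p^e} (x_2 \cdots x_d)^{(t-1)p^e} \in (J, x_2^t, \ldots, x_d^t)^{[p^e]}$. -/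
/-!
Write the hypothesis as `x₁^{(t-1)q} s + w` with `s ∈ J^{[q]}` and `w ∈ (x₂^{tq}, …, x_d^{tq})`;
this uses that `I ↦ I^{[q]}` is extension along the Frobenius, so it commutes with sums,
products and generators. Then `x₁^{(t-1)q} (c r^q (x₂ ⋯ x_d)^{(t-1)q} - s)` lies in
`(x₂^{tq}, …, x_d^{tq})`, and it remains to cancel `x₁^{(t-1)q}`. That is possible for any
weakly regular sequence `z, y₁, …, y_k` and any exponents: weak regularity modulo an ideal
survives raising the elements to powers, and the first element is regular modulo all the others.
Both facts reduce, by induction along the sequence, to two neighbours `z, w`: if `z` is regular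
on `R ⧸ I` and `w` on `R ⧸ (I + (z))`, then `z` is regular on `R ⧸ (I + (w))` and `w` on
`R ⧸ (I + (zᵃ))`.
-/

open Ideal RingTheory.Sequence

section

variable {R : Type*} [CommRing R]

lemma isSMulRegular_quotient_iff_mul_mem {I : Ideal R} {r : R} :
    IsSMulRegular (R ⧸ I) r ↔ ∀ x, r * x ∈ I → x ∈ I :=
  isSMulRegular_quotient_iff_mem_of_smul_mem I r

lemma mem_sup_span_singleton_iff {I : Ideal R} {x y : R} :
    x ∈ I ⊔ span {y} ↔ ∃ a, x - a * y ∈ I := by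
  rw [sup_comm, mem_span_singleton_sup]
  constructor
  · rintro ⟨a, b, hb, rfl⟩
    exact ⟨a, by simpa using hb⟩
  · rintro ⟨a, h⟩
    exact ⟨a, _, h, by ring⟩

lemma IsSMulRegular.quotient_sup_span_swap {I : Ideal R} {z w : R}
    (hz : IsSMulRegular (R ⧸ I) z) (hw : IsSMulRegular (R ⧸ (I ⊔ span {z})) w) :
    IsSMulRegular (R ⧸ (I ⊔ span {w})) z := by
  rw [isSMulRegular_quotient_iff_mul_mem] at hz hw ⊢
  intro u hu
  obtain ⟨v, hv⟩ := mem_sup_span_singleton_iff.mp hu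
  obtain ⟨k, hk⟩ := mem_sup_span_singleton_iff.mp <| hw v <|
    mem_sup_span_singleton_iff.mpr ⟨u, by convert I.neg_mem hv using 1; ring⟩
  refine mem_sup_span_singleton_iff.mpr ⟨k, hz _ ?_⟩
  convert I.add_mem hv (I.mul_mem_left w hk) using 1
  ring

lemma IsSMulRegular.quotient_sup_span_pow {I : Ideal R} {z w : R}
    (hz : IsSMulRegular (R ⧸ I) z) (hw : IsSMulRegular (R ⧸ (I ⊔ span {z})) w) (a : ℕ) :
    IsSMulRegular (R ⧸ (I ⊔ span {z ^ a})) w := by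
  induction a with
  | zero =>
    rw [pow_zero, span_singleton_one, sup_top_eq, isSMulRegular_quotient_iff_mul_mem]
    exact fun _ _ ↦ Submodule.mem_top
  | succ a ih =>
    have hza := isSMulRegular_quotient_iff_mul_mem.mp (hz.pow a)
    rw [isSMulRegular_quotient_iff_mul_mem] at hw ih ⊢
    intro u hu
    have hle : I ⊔ span {z ^ (a + 1)} ≤ I ⊔ span {z ^ a} :=
      sup_le_sup_left (span_singleton_le_span_singleton.mpr ⟨z, pow_succ z a⟩) I
    obtain ⟨c, hc⟩ := mem_sup_span_singleton_iff.mp (ih u (hle hu))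
    obtain ⟨d, hd⟩ := mem_sup_span_singleton_iff.mp hu
    have hcd : w * c - d * z ∈ I := by
      refine hza _ ?_
      convert I.sub_mem hd (I.mul_mem_left w hc) using 1
      ring
    obtain ⟨e, he⟩ :=
      mem_sup_span_singleton_iff.mp (hw c (mem_sup_span_singleton_iff.mpr ⟨d, hcd⟩))
    refine mem_sup_span_singleton_iff.mpr ⟨e, ?_⟩
    convert I.add_mem hc (I.mul_mem_left (z ^ a) he) using 1
    ring

/-- `IsWeaklyRegular (R ⧸ I) rs`, with every intermediate quotient kept as a quotient of `R`. -/
def IsWeaklyRegularMod (I : Ideal R) : List R → Prop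
  | [] => True
  | r :: rs => IsSMulRegular (R ⧸ I) r ∧ IsWeaklyRegularMod (I ⊔ span {r}) rs

namespace IsWeaklyRegularMod

theorem isSMulRegular_head {z : R} :
    ∀ {L : List R} {I : Ideal R}, IsWeaklyRegularMod I (z :: L) →
      IsSMulRegular (R ⧸ (I ⊔ ofList L)) z
  | [], _, h => by rw [ofList_nil, sup_bot_eq]; exact h.1
  | y :: _, _, ⟨hz, hy, hL⟩ => by
    rw [ofList_cons, ← sup_assoc]
    exact isSMulRegular_head ⟨hz.quotient_sup_span_swap hy, by rwa [sup_right_comm]⟩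

theorem sup_span_pow {z : R} (a : ℕ) :
    ∀ {L : List R} {I : Ideal R}, IsWeaklyRegularMod I (z :: L) →
      IsWeaklyRegularMod (I ⊔ span {z ^ a}) L
  | [], _, _ => trivial
  | _ :: _, _, ⟨hz, hw, hL⟩ => by
    refine ⟨hz.quotient_sup_span_pow hw a, ?_⟩
    rw [sup_right_comm]
    exact sup_span_pow a ⟨hz.quotient_sup_span_swap hw, by rwa [sup_right_comm]⟩

theorem map_pow (n : ℕ) :
    ∀ {L : List R} {I : Ideal R}, IsWeaklyRegularMod I L → IsWeaklyRegularMod I (L.map (· ^ n))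
  | [], _, _ => trivial
  | _ :: _, _, h => ⟨h.1.pow n, map_pow n (h.sup_span_pow n)⟩

theorem of_isSMulRegular_take :
    ∀ {L : List R} {I : Ideal R},
      (∀ i (h : i < L.length), IsSMulRegular (R ⧸ (I ⊔ ofList (L.take i))) L[i]) →
      IsWeaklyRegularMod I L
  | [], _, _ => trivial
  | _ :: L, I, h => by
    refine ⟨?_, of_isSMulRegular_take fun i hi ↦ ?_⟩
    · have := h 0 (Nat.succ_pos _)
      rwa [List.take_zero, ofList_nil, sup_bot_eq] at this
    · have := h (i + 1) (Nat.succ_lt_succ hi)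
      rwa [List.take_succ_cons, ofList_cons, ← sup_assoc] at this

end IsWeaklyRegularMod

theorem RingTheory.Sequence.IsWeaklyRegular.isWeaklyRegularMod_bot {L : List R}
    (h : IsWeaklyRegular R L) : IsWeaklyRegularMod ⊥ L :=
  .of_isSMulRegular_take fun i hi ↦ by
    have := h.regular_mod_prev i hi
    rwa [smul_eq_mul, mul_top, ← bot_sup_eq (ofList _)] at this

lemma ofList_ofFn {k : ℕ} (f : Fin k → R) : ofList (List.ofFn f) = span (Set.range f) :=
  congrArg span (Set.ext fun _ ↦ List.mem_ofFn)

theorem RingTheory.Sequence.IsWeaklyRegular.isSMulRegular_pow_quotient_ofList_map_pow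
    {z : R} {L : List R} (h : IsWeaklyRegular R (z :: L)) (m n : ℕ) :
    IsSMulRegular (R ⧸ ofList (L.map (· ^ n))) (z ^ m) := by
  obtain ⟨hz, hL⟩ := h.isWeaklyRegularMod_bot
  have := (IsWeaklyRegularMod.isSMulRegular_head (L := L.map (· ^ n)) ⟨hz, hL.map_pow n⟩).pow m
  rwa [bot_sup_eq] at this

section Frobenius

variable (p : ℕ) [ExpChar R p] (e : ℕ)

lemma frobPow_eq_map (I : Ideal R) : frobPow I (p ^ e) = I.map (iterateFrobenius R p e) := rfl

lemma frobPow_sup (I J : Ideal R) :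
    frobPow (I ⊔ J) (p ^ e) = frobPow I (p ^ e) ⊔ frobPow J (p ^ e) := by
  simp only [frobPow_eq_map, Ideal.map_sup]

lemma frobPow_mul (I J : Ideal R) :
    frobPow (I * J) (p ^ e) = frobPow I (p ^ e) * frobPow J (p ^ e) := by
  simp only [frobPow_eq_map, Ideal.map_mul]

lemma frobPow_span (s : Set R) : frobPow (span s) (p ^ e) = span ((· ^ p ^ e) '' s) := by
  rw [frobPow_eq_map, map_span]
  rfl

lemma frobPow_span_range {ι : Type*} (f : ι → R) :
    frobPow (span (Set.range f)) (p ^ e) = span (Set.range fun i ↦ f i ^ p ^ e) := by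
  rw [frobPow_span, ← Set.range_comp]
  rfl

end Frobenius

end

open RingTheory.Sequence in
theorem statement14_general (p : ℕ) [Fact p.Prime]
    (R : Type*) [CommRing R] [CharP R p]
    {d : ℕ} (x : Fin (d + 1) → R) (hreg : IsRegular R (List.ofFn x))
    (J : Ideal R) (c r : R) (e t : ℕ)
    (hmem : c * r ^ p ^ e * (∏ i, x i) ^ ((t - 1) * p ^ e) ∈
      frobPow (Ideal.span {x 0 ^ (t - 1)} * J ⊔
        Ideal.span (Set.range fun i : Fin d => x i.succ ^ t)) (p ^ e)) :
    c * r ^ p ^ e * (∏ i : Fin d, x i.succ) ^ ((t - 1) * p ^ e) ∈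
      frobPow (J ⊔ Ideal.span (Set.range fun i : Fin d => x i.succ ^ t)) (p ^ e) := by
  rw [frobPow_sup p, frobPow_mul p, frobPow_span p, Set.image_singleton, frobPow_span_range p]
    at hmem
  rw [frobPow_sup p, frobPow_span_range p]
  simp only [← pow_mul] at hmem ⊢
  set W := span (Set.range fun i : Fin d ↦ x i.succ ^ (t * p ^ e))
  have hW : IsSMulRegular (R ⧸ W) (x 0 ^ ((t - 1) * p ^ e)) := by
    have h := hreg.toIsWeaklyRegular
    rw [List.ofFn_succ] at h
    have := h.isSMulRegular_pow_quotient_ofList_map_pow ((t - 1) * p ^ e) (t * p ^ e)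
    rwa [List.map_ofFn, ofList_ofFn, Function.comp_def] at this
  obtain ⟨a, ha, w, hw, haw⟩ := Submodule.mem_sup.mp hmem
  obtain ⟨s, hs, rfl⟩ := mem_span_singleton_mul.mp ha
  have hrest : c * r ^ p ^ e * (∏ i : Fin d, x i.succ) ^ ((t - 1) * p ^ e) - s ∈ W := by
    refine mem_of_isSMulRegular_quotient_of_smul_mem hW ?_
    rw [Fin.prod_univ_succ, mul_pow] at haw
    convert hw using 1
    linear_combination -haw
  simpa only [add_sub_cancel] using
    add_mem (Submodule.mem_sup_left hs) (Submodule.mem_sup_right hrest)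

open RingTheory.Sequence in
/-- Let `R` be a Noetherian ring of prime characteristic `p`,
`x₁, …, x_d` a regular sequence, `J ⊆ R` an ideal with `x₁ ∈ J`, and `c, r ∈ R`,
`e, t ≥ 1` integers such that
`c r^{pᵉ} (x₁ x₂ ⋯ x_d)^{(t-1)pᵉ} ∈ (x₁^{t-1} J, x₂ᵗ, …, x_dᵗ)^{[pᵉ]}`.
Then `c r^{pᵉ} (x₂ ⋯ x_d)^{(t-1)pᵉ} ∈ (J, x₂ᵗ, …, x_dᵗ)^{[pᵉ]}`. -/
theorem statement14 (p : ℕ) [Fact p.Prime]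
    (R : Type*) [CommRing R] [IsNoetherianRing R] [CharP R p]
    {d : ℕ} (x : Fin (d + 1) → R) (hreg : IsRegular R (List.ofFn x))
    (J : Ideal R) (hx1 : x 0 ∈ J) (c r : R) (e t : ℕ) (he : 1 ≤ e) (ht : 1 ≤ t)
    (hmem : c * r ^ p ^ e * (∏ i, x i) ^ ((t - 1) * p ^ e) ∈
      frobPow (Ideal.span {x 0 ^ (t - 1)} * J ⊔
        Ideal.span (Set.range fun i : Fin d => x i.succ ^ t)) (p ^ e)) :
    c * r ^ p ^ e * (∏ i : Fin d, x i.succ) ^ ((t - 1) * p ^ e) ∈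
      frobPow (J ⊔ Ideal.span (Set.range fun i : Fin d => x i.succ ^ t)) (p ^ e) :=
  statement14_general p R x hreg J c r e t hmem
end
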